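/- Consider multi-task learning with shared parameters φ ∈ ℝ^d and a base point φ^t. For each task k, let L̃_k : ℝ^d → ℝ be differentiable with ‖∇L̃_k(x)‖ ≤ l for all x. Let η_t > 0 be a learning rate, let G_k ∈ ℝ^d with ‖G_k‖ ≤ l for all k, and define updates φ_{X} = φ^t − η_t Σ_{k∈X} G_k for X a nonempty finite set of tasks. Fix a target task j and a nonempty finite set A of source tasks, and assume L̃_j(φ_{{j}}) ≥ C > 0. Define transfer gains S_{A→j} = 1 − L̃_j(φ_{A∪{j}})/L̃_j(φ_{{j}}) and S_{i→j} = 1 − L̃_j(φ_{{i,j}})/L̃_j(φ_{{j}}). Then |S_{A→j} − (1/|A|) Σ_{i∈A} S_{i→j}| ≤ η_t (1 + |A|) l² / C. -/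
import Mathlib

theorem stmt_4 {d : ℕ} {ι : Type*} [DecidableEq ι]
    (L : ι → EuclideanSpace ℝ (Fin d) → ℝ) (l η C : ℝ)
    (hL : ∀ k, Differentiable ℝ (L k)) (hgrad : ∀ k x, ‖gradient (L k) x‖ ≤ l)
    (φt : EuclideanSpace ℝ (Fin d)) (G : ι → EuclideanSpace ℝ (Fin d))
    (hG : ∀ k, ‖G k‖ ≤ l) (hη : 0 < η)
    (φ : Finset ι → EuclideanSpace ℝ (Fin d))
    (hφ : ∀ X : Finset ι, φ X = φt - η • ∑ k ∈ X, G k)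
    (j : ι) (A : Finset ι) (hA : A.Nonempty) (hj : j ∉ A)
    (hC : 0 < C) (hCle : C ≤ L j (φ {j})) :
    |(1 - L j (φ (insert j A)) / L j (φ {j})) -
      (1 / (A.card : ℝ)) * ∑ i ∈ A, (1 - L j (φ {i, j}) / L j (φ {j}))| ≤
      η * (1 + (A.card : ℝ)) * l ^ 2 / C := by
  have hl : 0 ≤ l := le_trans (norm_nonneg _) (hgrad j φt)
  set b := L j (φ {j}) with hb
  have hbpos : 0 < b := lt_of_lt_of_le hC hCle
  set n : ℝ := (A.card : ℝ) with hn
  have hnpos : 0 < n := by rw [hn]; exact_mod_cast Finset.card_pos.mpr hA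
  -- fderiv norm bound
  have hfd : ∀ x, ‖fderiv ℝ (L j) x‖ ≤ l := fun x => by
    have h := hgrad j x
    rwa [gradient, LinearIsometryEquiv.norm_map] at h
  have hlip : ∀ x y : EuclideanSpace ℝ (Fin d), ‖L j y - L j x‖ ≤ l * ‖y - x‖ := fun x y =>
    (convex_univ (𝕜 := ℝ)).norm_image_sub_le_of_norm_fderiv_le
      (fun z _ => (hL j).differentiableAt) (fun z _ => hfd z) trivial trivial
  -- distance bound for each i ∈ A
  have hdist : ∀ i ∈ A, ‖φ {i, j} - φ (insert j A)‖ ≤ η * ((1 + n) * l) := by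
    intro i hi
    have hij : i ≠ j := fun h => hj (h ▸ hi)
    have hsum : (∑ k ∈ insert j A, G k) - (∑ k ∈ ({i, j} : Finset ι), G k)
        = ∑ k ∈ A.erase i, G k := by
      rw [Finset.sum_insert hj, Finset.sum_pair hij,
        ← Finset.add_sum_erase A G hi]
      abel
    have : φ {i, j} - φ (insert j A) = η • ∑ k ∈ A.erase i, G k := by
      rw [hφ, hφ, ← hsum]
      rw [smul_sub]
      abel
    rw [this, norm_smul, Real.norm_eq_abs, abs_of_pos hη]
    have h1 : ‖∑ k ∈ A.erase i, G k‖ ≤ ((A.erase i).card : ℝ) * l := by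
      calc ‖∑ k ∈ A.erase i, G k‖ ≤ ∑ k ∈ A.erase i, ‖G k‖ := norm_sum_le _ _
        _ ≤ ∑ _k ∈ A.erase i, l := Finset.sum_le_sum fun k _ => hG k
        _ = ((A.erase i).card : ℝ) * l := by rw [Finset.sum_const, nsmul_eq_mul]
    have h2 : ((A.erase i).card : ℝ) ≤ 1 + n := by
      have := Finset.card_erase_le (a := i) (s := A)
      have : ((A.erase i).card : ℝ) ≤ n := by rw [hn]; exact_mod_cast this
      linarith
    have := h1.trans (by nlinarith : ((A.erase i).card : ℝ) * l ≤ (1 + n) * l)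
    nlinarith
  -- per-term bound
  have hterm : ∀ i ∈ A, |L j (φ {i, j}) - L j (φ (insert j A))| ≤ η * (1 + n) * l ^ 2 := by
    intro i hi
    calc |L j (φ {i, j}) - L j (φ (insert j A))|
        ≤ l * ‖φ {i, j} - φ (insert j A)‖ := hlip _ _
      _ ≤ l * (η * ((1 + n) * l)) := by
          exact mul_le_mul_of_nonneg_left (hdist i hi) hl
      _ = η * (1 + n) * l ^ 2 := by ring
  -- rewrite LHS
  have hkey : (1 - L j (φ (insert j A)) / b) - (1 / n) * ∑ i ∈ A, (1 - L j (φ {i, j}) / b)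
      = (∑ i ∈ A, (L j (φ {i, j}) - L j (φ (insert j A)))) / (n * b) := by
    rw [Finset.sum_sub_distrib, Finset.sum_sub_distrib, Finset.sum_const, Finset.sum_const,
      ← Finset.sum_div]
    field_simp
    ring
  rw [hkey, abs_div, abs_of_pos (mul_pos hnpos hbpos), div_le_iff₀ (mul_pos hnpos hbpos)]
  have hsum : |∑ i ∈ A, (L j (φ {i, j}) - L j (φ (insert j A)))| ≤ n * (η * (1 + n) * l ^ 2) := by
    calc |∑ i ∈ A, (L j (φ {i, j}) - L j (φ (insert j A)))|
        ≤ ∑ i ∈ A, |L j (φ {i, j}) - L j (φ (insert j A))| := Finset.abs_sum_le_sum_abs _ _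
      _ ≤ ∑ _i ∈ A, η * (1 + n) * l ^ 2 := Finset.sum_le_sum hterm
      _ = n * (η * (1 + n) * l ^ 2) := by rw [Finset.sum_const, nsmul_eq_mul]
  have hdiv : η * (1 + n) * l ^ 2 / C * (n * b) = (η * (1 + n) * l ^ 2 / C * b) * n := by ring
  calc |∑ i ∈ A, (L j (φ {i, j}) - L j (φ (insert j A)))|
      ≤ n * (η * (1 + n) * l ^ 2) := hsum
    _ ≤ η * (1 + n) * l ^ 2 / C * (n * b) := by
        rw [hdiv]
        have h1 : η * (1 + n) * l ^ 2 ≤ η * (1 + n) * l ^ 2 / C * b := by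
          rw [div_mul_eq_mul_div, le_div_iff₀ hC]
          have hnn : 0 ≤ η * (1 + n) * l ^ 2 := by positivity
          nlinarith
        nlinarith
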